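/- The Alexandrov interval topology on Minkowski space ℝ × ℝ³, generated by sets A(e₁,e₂) = {e : e₁ ≪ e ≪ e₂} with ≪ the chronological order (t₂ − t₁ > ‖x₂ − x₁‖/c), is Hausdorff. -/
import Mathlib

theorem stmt_18 (c : ℝ) (hc : 0 < c) :
    let ll : (ℝ × EuclideanSpace ℝ (Fin 3)) → (ℝ × EuclideanSpace ℝ (Fin 3)) → Prop :=
      fun e₁ e₂ => c * (e₂.1 - e₁.1) > ‖e₂.2 - e₁.2‖
    @T2Space (ℝ × EuclideanSpace ℝ (Fin 3))
      (TopologicalSpace.generateFrom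
        {s | ∃ e₁ e₂, s = {e | ll e₁ e ∧ ll e e₂}}) := by
  intro ll
  letI T := TopologicalSpace.generateFrom
      {s : Set (ℝ × EuclideanSpace ℝ (Fin 3)) | ∃ e₁ e₂, s = {e | ll e₁ e ∧ ll e e₂}}
  constructor
  intro p q hpq
  -- diamond around a with half-height δ
  set D : (ℝ × EuclideanSpace ℝ (Fin 3)) → ℝ → Set (ℝ × EuclideanSpace ℝ (Fin 3)) :=
    fun a δ => {e | ll (a.1 - δ, a.2) e ∧ ll e (a.1 + δ, a.2)} with hD
  have hopen : ∀ a δ, IsOpen (D a δ) := by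
    intro a δ
    exact TopologicalSpace.GenerateOpen.basic _ ⟨(a.1 - δ, a.2), (a.1 + δ, a.2), rfl⟩
  have hmem : ∀ a : ℝ × EuclideanSpace ℝ (Fin 3), ∀ δ : ℝ, 0 < δ → a ∈ D a δ := by
    intro a δ hδ
    constructor <;> simp [ll] <;> nlinarith
  have hbound : ∀ (a : ℝ × EuclideanSpace ℝ (Fin 3)) (δ : ℝ) (e : ℝ × EuclideanSpace ℝ (Fin 3)),
      e ∈ D a δ → |e.1 - a.1| < δ ∧ ‖e.2 - a.2‖ < c * δ := by
    intro a δ e ⟨h1, h2⟩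
    simp only [ll] at h1 h2
    rw [norm_sub_rev] at h2
    have hn : (0:ℝ) ≤ ‖e.2 - a.2‖ := norm_nonneg _
    constructor
    · rw [abs_lt]; constructor <;> nlinarith
    · nlinarith
  set δ : ℝ := (|q.1 - p.1| + ‖q.2 - p.2‖ / c) / 4 with hδdef
  have hδ : 0 < δ := by
    have : p.1 ≠ q.1 ∨ p.2 ≠ q.2 := by
      by_contra h
      push_neg at h
      exact hpq (Prod.ext h.1 h.2)
    rcases this with h | h
    · have : 0 < |q.1 - p.1| := abs_pos.mpr (sub_ne_zero.mpr (Ne.symm h))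
      have : 0 ≤ ‖q.2 - p.2‖ / c := div_nonneg (norm_nonneg _) hc.le
      positivity
    · have h1 : 0 < ‖q.2 - p.2‖ := norm_pos_iff.mpr (sub_ne_zero.mpr (Ne.symm h))
      have h2 : 0 < ‖q.2 - p.2‖ / c := div_pos h1 hc
      have : (0:ℝ) ≤ |q.1 - p.1| := abs_nonneg _
      positivity
  refine ⟨D p δ, D q δ, hopen _ _, hopen _ _, hmem _ _ hδ, hmem _ _ hδ, ?_⟩
  rw [Set.disjoint_left]
  intro e hep heq
  obtain ⟨ht1, hx1⟩ := hbound p δ e hep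
  obtain ⟨ht2, hx2⟩ := hbound q δ e heq
  have hT : |q.1 - p.1| < 2 * δ := by
    have h := abs_sub_le q.1 e.1 p.1
    rw [abs_sub_comm q.1 e.1] at h
    linarith
  have hX : ‖q.2 - p.2‖ < 2 * c * δ := by
    calc ‖q.2 - p.2‖ = ‖(e.2 - p.2) - (e.2 - q.2)‖ := by congr 1; abel
      _ ≤ ‖e.2 - p.2‖ + ‖e.2 - q.2‖ := norm_sub_le _ _
      _ < 2 * c * δ := by linarith
  have : |q.1 - p.1| + ‖q.2 - p.2‖ / c < 4 * δ := by
    have : ‖q.2 - p.2‖ / c < 2 * δ := by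
      rw [div_lt_iff₀ hc]; nlinarith
    linarith
  rw [hδdef] at this
  linarith
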